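/- arXiv:0805.0087 — 3 statements merged into one kernel-verified Lean document; each statement's English description precedes it below -/
import Mathlib

section
/- Let c > 0 and T_r > 0 be constants, and let f, x, y, k be points of the Euclidean plane with dist(f, x) > 0, dist(f, y) > 0, dist(k, x) > 0, dist(k, y) > 0. If dist(k, y) · dist(f, x) = dist(f, y) · dist(k, x) (i.e., k lies on the deception circle of f for receivers x and y), then the transmission strength T := T_r · dist(f, x)²/dist(k, x)² is positive and satisfies both c·T/dist(f, x)² = c·T_r/dist(k, x)² and c·T/dist(f, y)² = c·T_r/dist(k, y)². That is, a transmission by f at strength T produces at both x and y exactly the received signal strength they would measure from a node located at k transmitting at strength T_r. -/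
/-! On the deception circle the distance ratio `ρ = dist f r / dist k r` is the same for both
receivers `r = x, y`. Scaling the strength by `ρ²` exactly compensates, at each receiver, for `f`
being `ρ` times as far away as `k`. -/

theorem rss_mul_div_sq_div_sq (c T : ℝ) {a : ℝ} (b : ℝ) (ha : a ≠ 0) :
    c * (T * (a / b) ^ 2) / a ^ 2 = c * T / b ^ 2 := by
  field_simp

theorem deception_circle_matching_TSS_general
    (c T_r : ℝ) (hT : 0 < T_r)
    (f x y k : EuclideanSpace ℝ (Fin 2))
    (hfx : 0 < dist f x) (hfy : 0 < dist f y)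
    (hkx : 0 < dist k x) (hky : 0 < dist k y)
    (hcirc : dist k y * dist f x = dist f y * dist k x) :
    0 < T_r * dist f x ^ 2 / dist k x ^ 2 ∧
    c * (T_r * dist f x ^ 2 / dist k x ^ 2) / dist f x ^ 2 = c * T_r / dist k x ^ 2 ∧
    c * (T_r * dist f x ^ 2 / dist k x ^ 2) / dist f y ^ 2 = c * T_r / dist k y ^ 2 := by
  have hratio : dist f x / dist k x = dist f y / dist k y :=
    (div_eq_div_iff hkx.ne' hky.ne').2 (by rw [mul_comm]; exact hcirc)
  have hscaled : T_r * dist f x ^ 2 / dist k x ^ 2 = T_r * (dist f x / dist k x) ^ 2 := by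
    rw [div_pow, mul_div_assoc]
  refine ⟨by positivity, ?_, ?_⟩ <;> rw [hscaled]
  · exact rss_mul_div_sq_div_sq c T_r _ hfx.ne'
  · rw [hratio]
    exact rss_mul_div_sq_div_sq c T_r _ hfy.ne'

/-- If `k` lies on the deception circle of the faulty node `f` for receivers `x` and `y`
(i.e. `dist k y * dist f x = dist f y * dist k x`), then the transmission strength
`T = T_r * dist f x ² / dist k x ²` is positive and a transmission from `f` at strength
`T` produces at both `x` and `y` exactly the RSS of a transmission from `k` at the
standard strength `T_r` (free-space model `R = c T / r²`). -/
theorem deception_circle_matching_TSS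
    (c T_r : ℝ) (hc : 0 < c) (hT : 0 < T_r)
    (f x y k : EuclideanSpace ℝ (Fin 2))
    (hfx : 0 < dist f x) (hfy : 0 < dist f y)
    (hkx : 0 < dist k x) (hky : 0 < dist k y)
    (hcirc : dist k y * dist f x = dist f y * dist k x) :
    0 < T_r * dist f x ^ 2 / dist k x ^ 2 ∧
    c * (T_r * dist f x ^ 2 / dist k x ^ 2) / dist f x ^ 2 = c * T_r / dist k x ^ 2 ∧
    c * (T_r * dist f x ^ 2 / dist k x ^ 2) / dist f y ^ 2 = c * T_r / dist k y ^ 2 :=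
  deception_circle_matching_TSS_general c T_r hT f x y k hfx hfy hkx hky hcirc
end

section
/- Let c, T_r, R_min > 0 be constants and r_t = √(c·T_r/R_min). Let f, x, y, k be points of the Euclidean plane with dist(f, x) > 0, dist(f, y) > 0 and dist(k, x) > 0. Then there exists a transmission strength T > 0 such that c·T/dist(f, x)² = c·T_r/dist(k, x)² (the RSS at x matches a transmission from k at strength T_r) and c·T/dist(f, y)² < R_min (y does not receive the message) if and only if dist(k, x) > r_t · dist(f, x)/dist(f, y). In other words, a faulty node f can deceive the single receiver x with a fictitious location k, unnoticed by y, exactly when k lies outside the circle of radius r_t·dist(f, x)/dist(f, y) around x. -/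
/-!
Matching the RSS at `x` forces the strength `T = T_r (|fx| / |kx|)²`. A node fails to receive
exactly when it lies outside the range `√(c T / R_min)`, and this range scales with `√T`, so
`y` is missed iff `r_t |fx| / |kx| < |fy|`, i.e. `|kx| > r_t |fx| / |fy|`.
-/

noncomputable section

def rss (c T r : ℝ) : ℝ := c * T / r ^ 2

def transmissionRange (c T R_min : ℝ) : ℝ := √(c * T / R_min)

variable {c T T' R_min : ℝ}

theorem rss_eq_rss_iff {a d : ℝ} (hc : c ≠ 0) (ha : a ≠ 0) (hd : d ≠ 0) :
    rss c T a = rss c T' d ↔ T = T' * (a / d) ^ 2 := by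
  unfold rss
  constructor
  · intro h
    field_simp at h ⊢
    linear_combination h
  · rintro rfl
    field_simp

theorem rss_lt_iff_transmissionRange_lt {r : ℝ} (hR : 0 < R_min) (hr : 0 < r) :
    rss c T r < R_min ↔ transmissionRange c T R_min < r := by
  rw [rss, transmissionRange, Real.sqrt_lt' hr, div_lt_iff₀ (by positivity),
    div_lt_iff₀ hR, mul_comm (r ^ 2)]

theorem transmissionRange_mul_sq {s : ℝ} (hs : 0 ≤ s) :
    transmissionRange c (T * s ^ 2) R_min = transmissionRange c T R_min * s := by
  have h : c * (T * s ^ 2) / R_min = c * T / R_min * s ^ 2 := by ring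
  rw [transmissionRange, transmissionRange, h, Real.sqrt_mul' _ (sq_nonneg s), Real.sqrt_sq hs]

end

/-- Single-receiver deception: with range `r_t = √(c T_r / R_min)`, the faulty node `f`
can choose a transmission strength `T > 0` whose RSS at `x` matches a transmission from
the fictitious location `k` at strength `T_r`, while `y` does not receive the message
(RSS below `R_min`), if and only if `dist k x > r_t * dist f x / dist f y`. -/
theorem single_receiver_deception_iff
    (c T_r R_min : ℝ) (hc : 0 < c) (hT : 0 < T_r) (hR : 0 < R_min)
    (f x y k : EuclideanSpace ℝ (Fin 2))
    (hfx : 0 < dist f x) (hfy : 0 < dist f y) (hkx : 0 < dist k x) :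
    (∃ T : ℝ, 0 < T ∧
        c * T / dist f x ^ 2 = c * T_r / dist k x ^ 2 ∧
        c * T / dist f y ^ 2 < R_min) ↔
      dist k x > Real.sqrt (c * T_r / R_min) * dist f x / dist f y := by
  change (∃ T, 0 < T ∧ rss c T (dist f x) = rss c T_r (dist k x) ∧ rss c T (dist f y) < R_min) ↔
    dist k x > transmissionRange c T_r R_min * dist f x / dist f y
  simp_rw [rss_eq_rss_iff hc.ne' hfx.ne' hkx.ne']
  calc (∃ T, 0 < T ∧ T = T_r * (dist f x / dist k x) ^ 2 ∧ rss c T (dist f y) < R_min)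
      ↔ rss c (T_r * (dist f x / dist k x) ^ 2) (dist f y) < R_min :=
        ⟨fun ⟨_, _, hT_eq, hlt⟩ => hT_eq ▸ hlt, fun h => ⟨_, by positivity, rfl, h⟩⟩
    _ ↔ transmissionRange c T_r R_min * (dist f x / dist k x) < dist f y := by
        rw [rss_lt_iff_transmissionRange_lt hR hfy, transmissionRange_mul_sq (by positivity)]
    _ ↔ dist k x > transmissionRange c T_r R_min * dist f x / dist f y := by
        rw [gt_iff_lt, div_lt_iff₀ hfy, mul_div_assoc', div_lt_iff₀ hkx, mul_comm (dist f y)]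
end

section
/- Let u and f be distinct points of the unit integer grid ℤ² (regarded as points of the Euclidean plane), and let r be any real number with r ≥ dist(f, u). Then there exist grid points v, w ∈ ℤ², both distinct from f and from u and from each other, such that dist(v, u) ≤ √2, dist(w, u) ≤ √2, dist(v, f) ≤ r, dist(w, f) ≤ r, and the three points u, v, w are not collinear. In other words, any broadcast by a faulty grid node f that reaches u also reaches at least two further grid neighbors of u such that the three receivers u, v, w are non-collinear. -/
/-!
Write `f = u + d` with `d ≠ 0`. A neighbour `u + p` is reached iff `|p - d|² ≤ |d|²`, and a unit
step along a nonzero coordinate of `d`, in the direction of its sign, never moves away from `f`.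
If both coordinates of `d` are nonzero, the two axis steps towards `f` work; if `d` lies on an
axis, the two diagonal steps straddling that axis work.
-/

/-- Embedding of the unit integer grid `ℤ × ℤ` into the Euclidean plane. -/
noncomputable def gridPt (p : ℤ × ℤ) : EuclideanSpace ℝ (Fin 2) :=
  WithLp.toLp 2 ![(p.1 : ℝ), (p.2 : ℝ)]

def gridNormSq (p : ℤ × ℤ) : ℤ := p.1 ^ 2 + p.2 ^ 2

lemma Int.exists_unit_step_toward {a : ℤ} (ha : a ≠ 0) :
    ∃ s : ℤ, s ^ 2 = 1 ∧ (a - s) ^ 2 + 1 ≤ a ^ 2 := by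
  rcases ha.lt_or_gt with ha | ha
  · exact ⟨-1, by norm_num, by nlinarith⟩
  · exact ⟨1, by norm_num, by nlinarith⟩

lemma exists_independent_neighbor_steps_toward {d : ℤ × ℤ} (hd : d ≠ 0) :
    ∃ p q : ℤ × ℤ, p ≠ d ∧ q ≠ d ∧ p.1 * q.2 - p.2 * q.1 ≠ 0 ∧
      gridNormSq p ≤ 2 ∧ gridNormSq q ≤ 2 ∧
      gridNormSq (p - d) ≤ gridNormSq d ∧ gridNormSq (q - d) ≤ gridNormSq d := by
  obtain ⟨a, b⟩ := d
  by_cases ha : a = 0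
  · obtain ⟨t, ht, hbt⟩ := Int.exists_unit_step_toward (a := b) fun hb => hd (by simp [ha, hb])
    refine ⟨(1, t), (-1, t), ?_⟩
    simp only [gridNormSq, ne_eq, Prod.ext_iff, Prod.mk_sub_mk]
    grind
  by_cases hb : b = 0
  · obtain ⟨s, hs, has⟩ := Int.exists_unit_step_toward ha
    refine ⟨(s, 1), (s, -1), ?_⟩
    simp only [gridNormSq, ne_eq, Prod.ext_iff, Prod.mk_sub_mk]
    grind
  · obtain ⟨s, hs, has⟩ := Int.exists_unit_step_toward ha
    obtain ⟨t, ht, hbt⟩ := Int.exists_unit_step_toward hb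
    refine ⟨(s, 0), (0, t), ?_⟩
    simp only [gridNormSq, ne_eq, Prod.ext_iff, Prod.mk_sub_mk]
    grind

lemma gridPt_add (p q : ℤ × ℤ) : gridPt (p + q) = gridPt p + gridPt q := by
  ext i; fin_cases i <;> simp [gridPt]

lemma dist_gridPt (p q : ℤ × ℤ) : dist (gridPt p) (gridPt q) = √(gridNormSq (p - q) : ℝ) := by
  simp [EuclideanSpace.dist_eq, gridPt, gridNormSq, Fin.sum_univ_two, Real.dist_eq, sq_abs]

lemma dist_gridPt_le_dist_gridPt_iff {p q p' q' : ℤ × ℤ} :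
    dist (gridPt p) (gridPt q) ≤ dist (gridPt p') (gridPt q') ↔
      gridNormSq (p - q) ≤ gridNormSq (p' - q') := by
  have h : (0 : ℝ) ≤ gridNormSq (p' - q') := by
    unfold gridNormSq; positivity
  rw [dist_gridPt, dist_gridPt, Real.sqrt_le_sqrt_iff h, Int.cast_le]

lemma not_collinear_gridPt_add {u p q : ℤ × ℤ} (h : p.1 * q.2 - p.2 * q.1 ≠ 0) :
    ¬ Collinear ℝ ({gridPt u, gridPt (u + p), gridPt (u + q)} :
      Set (EuclideanSpace ℝ (Fin 2))) := by
  intro hcol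
  obtain ⟨d, hd⟩ := (collinear_iff_of_mem (Set.mem_insert _ _)).1 hcol
  have coords : ∀ (x : ℤ × ℤ) (c : ℝ), gridPt (u + x) = c • d +ᵥ gridPt u →
      (x.1 : ℝ) = c * d 0 ∧ (x.2 : ℝ) = c * d 1 := by
    intro x c hc
    rw [gridPt_add, vadd_eq_add, add_comm _ (gridPt u), add_right_inj] at hc
    exact ⟨by simpa [gridPt] using congrArg (· 0) hc, by simpa [gridPt] using congrArg (· 1) hc⟩
  obtain ⟨c₁, hc₁⟩ := hd (gridPt (u + p)) (by simp)
  obtain ⟨c₂, hc₂⟩ := hd (gridPt (u + q)) (by simp)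
  obtain ⟨hp₁, hp₂⟩ := coords p c₁ hc₁
  obtain ⟨hq₁, hq₂⟩ := coords q c₂ hc₂
  apply h
  exact_mod_cast show (p.1 * q.2 - p.2 * q.1 : ℝ) = 0 by rw [hp₁, hp₂, hq₁, hq₂]; ring

/-- Any broadcast of a faulty grid node `f` that reaches the grid node `u ≠ f` (i.e. is
received within every disk of radius `r ≥ dist f u` around `f`) also reaches two further
grid neighbors `v, w` of `u` (at distance at most `√2` from `u`), all distinct from `u`,
`f` and each other, such that the three receivers `u, v, w` are not collinear. -/
theorem grid_broadcast_three_noncollinear_receivers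
    (u f : ℤ × ℤ) (huf : u ≠ f) (r : ℝ) (hr : dist (gridPt f) (gridPt u) ≤ r) :
    ∃ v w : ℤ × ℤ,
      v ≠ f ∧ v ≠ u ∧ w ≠ f ∧ w ≠ u ∧ v ≠ w ∧
      dist (gridPt v) (gridPt u) ≤ Real.sqrt 2 ∧
      dist (gridPt w) (gridPt u) ≤ Real.sqrt 2 ∧
      dist (gridPt v) (gridPt f) ≤ r ∧
      dist (gridPt w) (gridPt f) ≤ r ∧
      ¬ Collinear ℝ ({gridPt u, gridPt v, gridPt w} :
        Set (EuclideanSpace ℝ (Fin 2))) := by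
  obtain ⟨p, q, hpd, hqd, hdet, hp, hq, hpf, hqf⟩ :=
    exists_independent_neighbor_steps_toward (sub_ne_zero.2 huf.symm)
  have hp₀ : p ≠ 0 := by rintro rfl; simp at hdet
  have hq₀ : q ≠ 0 := by rintro rfl; simp at hdet
  have hpq : p ≠ q := by rintro rfl; exact hdet (by ring)
  have near : ∀ x, gridNormSq x ≤ 2 → dist (gridPt (u + x)) (gridPt u) ≤ √2 := fun x hx => by
    rw [dist_gridPt, add_sub_cancel_left]
    exact Real.sqrt_le_sqrt (by exact_mod_cast hx)
  have reached : ∀ x, gridNormSq (x - (f - u)) ≤ gridNormSq (f - u) →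
      dist (gridPt (u + x)) (gridPt f) ≤ r := fun x hx =>
    (dist_gridPt_le_dist_gridPt_iff.2 (by rwa [show u + x - f = x - (f - u) by abel])).trans hr
  refine ⟨u + p, u + q, fun h => hpd (eq_sub_of_add_eq' h), by simpa using hp₀,
    fun h => hqd (eq_sub_of_add_eq' h), by simpa using hq₀, by simpa using hpq, near p hp,
    near q hq, reached p hpf, reached q hqf, not_collinear_gridPt_add hdet⟩
end
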